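/- In the Trimmed Graphical Lasso deterministic setting, under hypotheses (H1)–(H4) and assuming the off-diagonal support S of Θ* satisfies |S| ≤ k, the error matrix satisfies the cone-type inequality Σ_{(i,j)∉S, i≠j}|Δ̃_{ij}| ≤ 3·Σ_{(i,j)∈S}|Δ̃_{ij}| + Σ_{i=1}^p |Δ̃_{ii}| + (2τ1/λ)·‖Δ̃‖_F. (Intermediate inequality in the proof of the off-diagonal ℓ1 bound of Theorem 1.) -/

import Mathlib

/-!
Write `Δ = Θ̃ - Θ*` and `Σ̃`, `Σ*` for the two weighted sample covariances. Splitting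
`Σ̃ - Θ̃⁻¹ = (Σ̃ - Σ*) + (Σ* - Θ*⁻¹) + (Θ*⁻¹ - Θ̃⁻¹)`, the first piece is controlled by
structural incoherence, the second by `‖Σ* - Θ*⁻¹‖_∞ ‖Δ‖₁ ≤ λ/4 ‖Δ‖₁`, and the third pairs
nonnegatively with `Δ` because `A ↦ -A⁻¹` is monotone on positive definite matrices. So
`⟨Σ̃ - Θ̃⁻¹, Δ⟩ ≥ -(τ₁ ‖Δ‖_F + λ/2 ‖Δ‖₁)`. Against stationarity and the decomposability
`‖Θ*‖_{1,off} - ‖Θ̃‖_{1,off} ≤ ‖Δ_S‖₁ - ‖Δ_{Sᶜ}‖₁`, splitting `‖Δ‖₁` into its parts on `S`, on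
the off-diagonal complement of `S`, and on the diagonal rearranges to the cone inequality.
-/

open Matrix

/-- Trace inner product ⟨U,V⟩ = tr(U Vᵀ). -/
noncomputable def traceInner {p : ℕ} (U V : Matrix (Fin p) (Fin p) ℝ) : ℝ :=
  (U * Vᵀ).trace

/-- Frobenius norm. -/
noncomputable def frobNorm {p : ℕ} (U : Matrix (Fin p) (Fin p) ℝ) : ℝ :=
  Real.sqrt (∑ i, ∑ j, (U i j) ^ 2)

/-- Entrywise ℓ1 norm: ‖U‖₁ = Σ_{i,j} |U_{ij}|. -/
noncomputable def l1Norm {p : ℕ} (U : Matrix (Fin p) (Fin p) ℝ) : ℝ :=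
  ∑ i, ∑ j, |U i j|

/-- Off-diagonal entrywise ℓ1 norm: ‖U‖_{1,off} = Σ_{i≠j} |U_{ij}|. -/
noncomputable def offNorm {p : ℕ} (U : Matrix (Fin p) (Fin p) ℝ) : ℝ :=
  ∑ ij ∈ Finset.univ.filter (fun ij : Fin p × Fin p => ij.1 ≠ ij.2), |U ij.1 ij.2|

/-- Entrywise sup norm: ‖U‖_∞ = max_{i,j} |U_{ij}|. -/
noncomputable def linfNorm {p : ℕ} (U : Matrix (Fin p) (Fin p) ℝ) : ℝ :=
  ⨆ ij : Fin p × Fin p, |U ij.1 ij.2|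


namespace Matrix

open scoped ComplexOrder

variable {n 𝕜 : Type*} [Fintype n] [RCLike 𝕜]

open scoped MatrixOrder in
theorem PosSemidef.trace_mul_nonneg [DecidableEq n] {A B : Matrix n n 𝕜} (hA : A.PosSemidef)
    (hB : B.PosSemidef) : 0 ≤ (A * B).trace := by
  obtain ⟨C, rfl⟩ := CStarAlgebra.nonneg_iff_eq_star_mul_self.mp hB.nonneg
  rw [star_eq_conjTranspose, ← Matrix.mul_assoc, trace_mul_comm, ← Matrix.mul_assoc]
  exact (hA.mul_mul_conjTranspose_same C).trace_nonneg

/-- Monotonicity of `A ↦ -A⁻¹`, the gradient of the convex map `-log det`. -/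
theorem PosDef.trace_inv_sub_inv_mul_sub_nonneg [DecidableEq n] {A B : Matrix n n 𝕜}
    (hA : A.PosDef) (hB : B.PosDef) : 0 ≤ ((A⁻¹ - B⁻¹) * (B - A)).trace := by
  have hinv_sub : A⁻¹ - B⁻¹ = A⁻¹ * (B - A) * B⁻¹ := by
    rw [Matrix.mul_sub, Matrix.sub_mul, Matrix.mul_assoc, mul_nonsing_inv _ hB.det_pos.ne'.isUnit,
      nonsing_inv_mul _ hA.det_pos.ne'.isUnit, Matrix.mul_one, Matrix.one_mul]
  have hmid := hB.inv.posSemidef.conjTranspose_mul_mul_same (B - A)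
  rw [(hB.1.sub hA.1).eq] at hmid
  rw [hinv_sub, Matrix.mul_assoc, Matrix.mul_assoc, ← Matrix.mul_assoc (B - A)]
  exact hA.inv.posSemidef.trace_mul_nonneg hmid

end Matrix

section EntrywiseNorms

variable {p : ℕ}

theorem traceInner_eq_sum (U V : Matrix (Fin p) (Fin p) ℝ) :
    traceInner U V = ∑ i, ∑ j, U i j * V i j := by
  simp [traceInner, Matrix.trace, Matrix.mul_apply]

theorem traceInner_add_left (U V W : Matrix (Fin p) (Fin p) ℝ) :
    traceInner (U + V) W = traceInner U W + traceInner V W := by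
  simp [traceInner, Matrix.add_mul]

theorem l1Norm_nonneg (U : Matrix (Fin p) (Fin p) ℝ) : 0 ≤ l1Norm U :=
  Finset.sum_nonneg fun _ _ => Finset.sum_nonneg fun _ _ => abs_nonneg _

theorem abs_traceInner_le_linfNorm_mul_l1Norm (U V : Matrix (Fin p) (Fin p) ℝ) :
    |traceInner U V| ≤ linfNorm U * l1Norm V := by
  have hU : ∀ i j, |U i j| ≤ linfNorm U := fun i j =>
    le_ciSup (f := fun ij : Fin p × Fin p => |U ij.1 ij.2|) (Set.finite_range _).bddAbove (i, j)
  rw [traceInner_eq_sum, l1Norm, Finset.mul_sum]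
  refine (Finset.abs_sum_le_sum_abs _ _).trans (Finset.sum_le_sum fun i _ => ?_)
  rw [Finset.mul_sum]
  refine (Finset.abs_sum_le_sum_abs _ _).trans (Finset.sum_le_sum fun j _ => ?_)
  rw [abs_mul]
  exact mul_le_mul_of_nonneg_right (hU i j) (abs_nonneg _)

theorem traceInner_inv_sub_inv_nonneg {A B : Matrix (Fin p) (Fin p) ℝ} (hA : A.PosDef)
    (hB : B.PosDef) : 0 ≤ traceInner (A⁻¹ - B⁻¹) (B - A) := by
  rw [traceInner, ← conjTranspose_eq_transpose_of_trivial, (hB.1.sub hA.1).eq]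
  exact hA.trace_inv_sub_inv_mul_sub_nonneg hB

end EntrywiseNorms

section OffDiagonalSupport

variable {p : ℕ}

def offDiagIndices (p : ℕ) : Finset (Fin p × Fin p) :=
  Finset.univ.filter fun ij => ij.1 ≠ ij.2

noncomputable def offDiagSupport (Θ : Matrix (Fin p) (Fin p) ℝ) : Finset (Fin p × Fin p) :=
  Finset.univ.filter fun ij => ij.1 ≠ ij.2 ∧ Θ ij.1 ij.2 ≠ 0

theorem offDiagSupport_subset (Θ : Matrix (Fin p) (Fin p) ℝ) :
    offDiagSupport Θ ⊆ offDiagIndices p :=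
  fun _ h => Finset.mem_filter.mpr ⟨Finset.mem_univ _, (Finset.mem_filter.mp h).2.1⟩

theorem apply_eq_zero_of_mem_sdiff_offDiagSupport {Θ : Matrix (Fin p) (Fin p) ℝ}
    {ij : Fin p × Fin p} (h : ij ∈ offDiagIndices p \ offDiagSupport Θ) : Θ ij.1 ij.2 = 0 := by
  simp only [offDiagIndices, offDiagSupport, Finset.mem_sdiff, Finset.mem_filter,
    Finset.mem_univ, true_and, not_and, not_not] at h
  exact h.2 h.1

theorem offNorm_eq_sum_offDiagSupport (Θ : Matrix (Fin p) (Fin p) ℝ) :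
    offNorm Θ = ∑ ij ∈ offDiagSupport Θ, |Θ ij.1 ij.2| :=
  (Finset.sum_subset (offDiagSupport_subset Θ) fun _ hoff hS => by
    rw [apply_eq_zero_of_mem_sdiff_offDiagSupport (Finset.mem_sdiff.mpr ⟨hoff, hS⟩),
      abs_zero]).symm

theorem offNorm_eq_sum_add_sum_sdiff (U : Matrix (Fin p) (Fin p) ℝ)
    {S : Finset (Fin p × Fin p)} (hS : S ⊆ offDiagIndices p) :
    offNorm U = ∑ ij ∈ S, |U ij.1 ij.2| + ∑ ij ∈ offDiagIndices p \ S, |U ij.1 ij.2| := by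
  rw [add_comm, Finset.sum_sdiff hS]
  rfl

theorem offNorm_sub_offNorm_le (Θ Θ' : Matrix (Fin p) (Fin p) ℝ) :
    offNorm Θ - offNorm Θ' ≤ ∑ ij ∈ offDiagSupport Θ, |(Θ' - Θ) ij.1 ij.2|
      - ∑ ij ∈ offDiagIndices p \ offDiagSupport Θ, |(Θ' - Θ) ij.1 ij.2| := by
  have houtside : ∑ ij ∈ offDiagIndices p \ offDiagSupport Θ, |Θ' ij.1 ij.2|
      = ∑ ij ∈ offDiagIndices p \ offDiagSupport Θ, |(Θ' - Θ) ij.1 ij.2| :=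
    Finset.sum_congr rfl fun ij hij => by
      rw [Matrix.sub_apply, apply_eq_zero_of_mem_sdiff_offDiagSupport hij, sub_zero]
  have hinside : ∑ ij ∈ offDiagSupport Θ, |Θ ij.1 ij.2| - ∑ ij ∈ offDiagSupport Θ, |Θ' ij.1 ij.2|
      ≤ ∑ ij ∈ offDiagSupport Θ, |(Θ' - Θ) ij.1 ij.2| := by
    rw [← Finset.sum_sub_distrib]
    exact Finset.sum_le_sum fun ij _ => by
      rw [Matrix.sub_apply, abs_sub_comm]
      exact abs_sub_abs_le_abs_sub _ _
  rw [offNorm_eq_sum_offDiagSupport Θ, offNorm_eq_sum_add_sum_sdiff Θ' (offDiagSupport_subset Θ),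
    houtside]
  linarith

theorem l1Norm_eq_offNorm_add_sum_diag (U : Matrix (Fin p) (Fin p) ℝ) :
    l1Norm U = offNorm U + ∑ i, |U i i| := by
  rw [l1Norm, offNorm, ← Fintype.sum_prod_type', ← Finset.sum_filter_add_sum_filter_not
    Finset.univ (fun ij : Fin p × Fin p => ij.1 ≠ ij.2)]
  congr 1
  simp only [ne_eq, not_not, Finset.sum_filter, Fintype.sum_prod_type]
  simp

end OffDiagonalSupport

theorem neg_le_traceInner_sub_inv {p : ℕ} {Θ Θ' C C' : Matrix (Fin p) (Fin p) ℝ}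
    {τ₁ τ₂ lam : ℝ} (hΘ : Θ.PosDef) (hΘ' : Θ'.PosDef)
    (hC : |traceInner (C' - C) (Θ' - Θ)| ≤ τ₁ * frobNorm (Θ' - Θ) + τ₂ * l1Norm (Θ' - Θ))
    (hlam : 4 * max (linfNorm (C - Θ⁻¹)) τ₂ ≤ lam) :
    -(τ₁ * frobNorm (Θ' - Θ) + lam / 2 * l1Norm (Θ' - Θ)) ≤ traceInner (C' - Θ'⁻¹) (Θ' - Θ) := by
  have hsplit : C' - Θ'⁻¹ = (C' - C) + (C - Θ⁻¹) + (Θ⁻¹ - Θ'⁻¹) := by abel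
  have hcurv := traceInner_inv_sub_inv_nonneg hΘ hΘ'
  have hnoise := abs_traceInner_le_linfNorm_mul_l1Norm (C - Θ⁻¹) (Θ' - Θ)
  have hl1 := l1Norm_nonneg (Θ' - Θ)
  have hlinf : linfNorm (C - Θ⁻¹) * l1Norm (Θ' - Θ) ≤ lam / 4 * l1Norm (Θ' - Θ) :=
    mul_le_mul_of_nonneg_right (by linarith [le_max_left (linfNorm (C - Θ⁻¹)) τ₂]) hl1
  have hτ₂ : τ₂ * l1Norm (Θ' - Θ) ≤ lam / 4 * l1Norm (Θ' - Θ) :=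
    mul_le_mul_of_nonneg_right (by linarith [le_max_right (linfNorm (C - Θ⁻¹)) τ₂]) hl1
  rw [hsplit, traceInner_add_left, traceInner_add_left]
  linarith [neg_abs_le (traceInner (C' - C) (Θ' - Θ)), neg_abs_le (traceInner (C - Θ⁻¹) (Θ' - Θ))]

theorem cone_inequality_general
    (p n h : ℕ)
    (x : Fin n → Fin p → ℝ)
    (Θstar Θtil : Matrix (Fin p) (Fin p) ℝ)
    (hΘstar : Θstar.PosDef) (hΘtil : Θtil.PosDef)
    (wtil wstar : Fin n → ℝ)
    (τ₁ τ₂ lam : ℝ) (hlam : 0 < lam)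
    (H1 : traceInner
        ((1 / (h : ℝ)) • ∑ i, wtil i • Matrix.vecMulVec (x i) (x i) - Θtil⁻¹)
        (Θtil - Θstar) ≤ lam * (offNorm Θstar - offNorm Θtil))
    (H3 : |traceInner
        ((1 / (h : ℝ)) • ∑ i, (wtil i - wstar i) • Matrix.vecMulVec (x i) (x i))
        (Θtil - Θstar)|
        ≤ τ₁ * frobNorm (Θtil - Θstar) + τ₂ * l1Norm (Θtil - Θstar))
    (H4a : 4 * max
        (linfNorm ((1 / (h : ℝ)) • ∑ i, wstar i • Matrix.vecMulVec (x i) (x i) - Θstar⁻¹))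
        τ₂ ≤ lam) :
    (∑ ij ∈ (Finset.univ.filter (fun ij : Fin p × Fin p => ij.1 ≠ ij.2)) \
        (Finset.univ.filter (fun ij : Fin p × Fin p => ij.1 ≠ ij.2 ∧ Θstar ij.1 ij.2 ≠ 0)),
        |(Θtil - Θstar) ij.1 ij.2|) ≤
      3 * (∑ ij ∈ Finset.univ.filter (fun ij : Fin p × Fin p => ij.1 ≠ ij.2 ∧ Θstar ij.1 ij.2 ≠ 0),
          |(Θtil - Θstar) ij.1 ij.2|)
        + (∑ i, |(Θtil - Θstar) i i|)
        + (2 * τ₁ / lam) * frobNorm (Θtil - Θstar) := by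
  change ∑ ij ∈ offDiagIndices p \ offDiagSupport Θstar, _ ≤
    3 * ∑ ij ∈ offDiagSupport Θstar, _ + _ + _
  simp only [sub_smul, Finset.sum_sub_distrib, smul_sub] at H3
  have hgrad := neg_le_traceInner_sub_inv hΘstar hΘtil H3 H4a
  have hgap := offNorm_sub_offNorm_le Θstar Θtil
  rw [l1Norm_eq_offNorm_add_sum_diag,
    offNorm_eq_sum_add_sum_sdiff _ (offDiagSupport_subset Θstar)] at hgrad
  have hfirst := H1.trans (mul_le_mul_of_nonneg_left hgap hlam.le)
  have hscale : lam * (2 * τ₁ / lam * frobNorm (Θtil - Θstar)) =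
      2 * τ₁ * frobNorm (Θtil - Θstar) := by
    field_simp
  refine le_of_mul_le_mul_left ?_ hlam
  rw [mul_add, mul_add, hscale]
  linarith

/-- Cone-type inequality from the proof of the off-diagonal ℓ1 bound of Theorem 1. -/
theorem cone_inequality
    (p n h : ℕ) (hp : 0 < p) (hn : 0 < n) (hh : 0 < h)
    (x : Fin n → Fin p → ℝ)
    (Θstar Θtil : Matrix (Fin p) (Fin p) ℝ)
    (hΘstar : Θstar.PosDef) (hΘtil : Θtil.PosDef)
    (R : ℝ) (hR : 0 < R) (hΘstarR : l1Norm Θstar ≤ R) (hΘtilR : l1Norm Θtil ≤ R)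
    (wtil wstar : Fin n → ℝ)
    (hwtil : ∀ i, wtil i ∈ Set.Icc (0 : ℝ) 1) (hwstar : ∀ i, wstar i ∈ Set.Icc (0 : ℝ) 1)
    (κ τ₁ τ₂ lam : ℝ) (hκ : 0 < κ) (hτ₁ : 0 ≤ τ₁) (hτ₂ : 0 ≤ τ₂) (hlam : 0 < lam)
    (H1 : traceInner
        ((1 / (h : ℝ)) • ∑ i, wtil i • Matrix.vecMulVec (x i) (x i) - Θtil⁻¹)
        (Θtil - Θstar) ≤ lam * (offNorm Θstar - offNorm Θtil))
    (H2 : ∀ Δ : Matrix (Fin p) (Fin p) ℝ, Δ.IsSymm → (Θstar + Δ).PosDef →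
        frobNorm Δ ≤ 1 →
        traceInner (Θstar⁻¹ - (Θstar + Δ)⁻¹) Δ ≥ κ * (frobNorm Δ) ^ 2)
    (H3 : |traceInner
        ((1 / (h : ℝ)) • ∑ i, (wtil i - wstar i) • Matrix.vecMulVec (x i) (x i))
        (Θtil - Θstar)|
        ≤ τ₁ * frobNorm (Θtil - Θstar) + τ₂ * l1Norm (Θtil - Θstar))
    (H4a : 4 * max
        (linfNorm ((1 / (h : ℝ)) • ∑ i, wstar i • Matrix.vecMulVec (x i) (x i) - Θstar⁻¹))
        τ₂ ≤ lam)
    (H4b : lam ≤ (κ - τ₁) / (3 * R))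
    (k : ℕ)
    (hk : (Finset.univ.filter
        (fun ij : Fin p × Fin p => ij.1 ≠ ij.2 ∧ Θstar ij.1 ij.2 ≠ 0)).card ≤ k) :
    (∑ ij ∈ (Finset.univ.filter (fun ij : Fin p × Fin p => ij.1 ≠ ij.2)) \
        (Finset.univ.filter (fun ij : Fin p × Fin p => ij.1 ≠ ij.2 ∧ Θstar ij.1 ij.2 ≠ 0)),
        |(Θtil - Θstar) ij.1 ij.2|) ≤
      3 * (∑ ij ∈ Finset.univ.filter (fun ij : Fin p × Fin p => ij.1 ≠ ij.2 ∧ Θstar ij.1 ij.2 ≠ 0),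
          |(Θtil - Θstar) ij.1 ij.2|)
        + (∑ i, |(Θtil - Θstar) i i|)
        + (2 * τ₁ / lam) * frobNorm (Θtil - Θstar) :=
  cone_inequality_general p n h x Θstar Θtil hΘstar hΘtil wtil wstar τ₁ τ₂ lam hlam H1 H3 H4a
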